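/- arXiv:2505.15969 — 2 statements merged into one kernel-verified Lean document; each statement's English description precedes it below -/
import Mathlib

section
/- Let A be an invertible complex n × n matrix that is orthogonally diagonalizable, i.e., A = U Λ Uᵀ with Λ diagonal and UᵀU = Id_n. Let Z be a complex n × k matrix with ZᵀZ = Id_k. If M is a complex k × k matrix such that A Z = Z M, then M is also orthogonally diagonalizable: there exists a complex k × k matrix Q with QᵀQ = Id_k and a diagonal matrix D such that M = Qᵀ D Q. -/
/-!
Put `W = Uᵀ Z`. Then `WᵀW = 1` and `ΛW = WM`, so `M = WᵀΛW` is symmetric, and the columns of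
`Wᵀ` are eigenvectors of `M` spanning `ℂᵏ`; hence `M` is diagonalizable. A diagonalizable
symmetric matrix is orthogonally diagonalizable: eigenspaces of distinct eigenvalues are
orthogonal for the bilinear form `x ⬝ᵥ y`, so gluing orthogonal bases of the eigenspaces gives an
orthogonal eigenbasis, whose vectors are non-isotropic because the form is nondegenerate and can
therefore be normalized by square roots.
-/

open Matrix Module

namespace Matrix

section Eigenspaces

variable {R m n : Type*} [CommRing R] [Fintype m] [Fintype n] [DecidableEq m]

theorem mul_eq_mul_diagonal_iff {M : Matrix n n R} {P : Matrix n m R} {d : m → R} :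
    M * P = P * diagonal d ↔ ∀ j, M *ᵥ P.col j = d j • P.col j := by
  rw [← Matrix.ext_iff, forall_comm]
  refine forall_congr' fun j => ?_
  rw [funext_iff]
  refine forall_congr' fun a => ?_
  rw [mul_diagonal, Pi.smul_apply, smul_eq_mul, col_apply, mul_comm]
  exact Iff.rfl

theorem iSup_eigenspace_toLin'_eq_top_of_mul_eq_mul_diagonal [DecidableEq n] {M : Matrix n n R}
    {P : Matrix n m R} {P' : Matrix m n R} {d : m → R}
    (h : M * P = P * diagonal d) (hP : P * P' = 1) :
    ⨆ μ, End.eigenspace (toLin' M) μ = ⊤ := by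
  refine eq_top_iff.2 fun x _ => ?_
  have hx : x ∈ LinearMap.range P.mulVecLin := ⟨P' *ᵥ x, by simp [mulVec_mulVec, hP]⟩
  rw [range_mulVecLin] at hx
  refine Submodule.span_le.2 ?_ hx
  rintro _ ⟨j, rfl⟩
  exact Submodule.mem_iSup_of_mem (d j)
    (End.mem_eigenspace_iff.2 (mul_eq_mul_diagonal_iff.1 h j))

end Eigenspaces

section Symmetric

variable {K n : Type*} [Field K] [Fintype n] [DecidableEq n] {M : Matrix n n K}

theorem IsSymm.dotProduct_eq_zero_of_mem_eigenspace (hM : M.IsSymm) {μ ν : K} (hμν : μ ≠ ν)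
    {x y : n → K} (hx : x ∈ End.eigenspace (toLin' M) μ) (hy : y ∈ End.eigenspace (toLin' M) ν) :
    x ⬝ᵥ y = 0 := by
  rw [End.mem_eigenspace_iff, toLin'_apply] at hx hy
  have h : μ * (x ⬝ᵥ y) = ν * (x ⬝ᵥ y) :=
    calc μ * (x ⬝ᵥ y) = M *ᵥ x ⬝ᵥ y := by rw [hx, smul_dotProduct, smul_eq_mul]
      _ = x ⬝ᵥ M *ᵥ y := by rw [dotProduct_mulVec, ← mulVec_transpose, hM.eq]
      _ = ν * (x ⬝ᵥ y) := by rw [hy, dotProduct_smul, smul_eq_mul]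
  exact (mul_eq_mul_right_iff.1 h).resolve_left hμν

theorem IsSymm.exists_basis_isOrthoᵢ_eigenvectors [Invertible (2 : K)] (hM : M.IsSymm)
    (htop : ⨆ μ, End.eigenspace (toLin' M) μ = ⊤) :
    ∃ (b : Basis n K (n → K)) (d : n → K),
      (dotProductBilin K K).IsOrthoᵢ b ∧ ∀ i, M *ᵥ b i = d i • b i := by
  classical
  have hint : DirectSum.IsInternal (End.eigenspace (toLin' M)) :=
    DirectSum.isInternal_submodule_of_iSupIndep_of_iSup_eq_top
      (End.eigenspaces_iSupIndep (toLin' M)) htop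
  have hsymm : (dotProductBilin K K : LinearMap.BilinForm K (n → K)).IsSymm :=
    ⟨fun x y => dotProduct_comm x y⟩
  choose bs hbs using fun μ => LinearMap.BilinForm.exists_orthogonal_basis
    (hsymm.domRestrict (End.eigenspace (toLin' M) μ))
  let b := hint.collectedBasis bs
  have hb : (dotProductBilin K K).IsOrthoᵢ b := by
    rintro ⟨μ, a⟩ ⟨ν, c⟩ hij
    rw [hint.collectedBasis_coe]
    rcases eq_or_ne μ ν with rfl | hμν
    · exact hbs μ fun hac => hij (Sigma.ext rfl (heq_of_eq hac))
    · exact hM.dotProduct_eq_zero_of_mem_eigenspace hμν (bs μ a).2 (bs ν c).2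
  let e := b.indexEquiv (Pi.basisFun K n)
  refine ⟨b.reindex e, fun i => (e.symm i).1, fun i j hij => ?_, fun i => ?_⟩
  · simpa only [Function.onFun, Basis.reindex_apply] using hb (e.symm.injective.ne hij)
  · rw [← toLin'_apply, ← End.mem_eigenspace_iff, Basis.reindex_apply]
    exact hint.collectedBasis_mem bs _

theorem IsSymm.exists_mul_transpose_eq_one_eigenvectors [IsAlgClosed K] [Invertible (2 : K)]
    (hM : M.IsSymm) (htop : ⨆ μ, End.eigenspace (toLin' M) μ = ⊤) :
    ∃ (Q : Matrix n n K) (d : n → K), Q * Qᵀ = 1 ∧ ∀ i, M *ᵥ Q i = d i • Q i := by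
  obtain ⟨b, d, hb, hbd⟩ := hM.exists_basis_isOrthoᵢ_eigenvectors htop
  have hself : ∀ i, b i ⬝ᵥ b i ≠ 0 :=
    hb.not_isOrtho_basis_self_of_separatingLeft fun x hx => dotProduct_eq_zero x hx
  choose r hr using fun i => IsAlgClosed.exists_pow_nat_eq (b i ⬝ᵥ b i) two_pos
  have hr0 : ∀ i, r i ≠ 0 := fun i h => hself i (by rw [← hr i, h, zero_pow two_ne_zero])
  let Q : Matrix n n K := of fun i => (r i)⁻¹ • b i
  have hQ : ∀ i, Q i = (r i)⁻¹ • b i := fun _ => rfl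
  refine ⟨Q, d, ?_, fun i => by rw [hQ, mulVec_smul, hbd, smul_comm]⟩
  ext i j
  rw [mul_apply', one_apply]
  change Q i ⬝ᵥ Q j = _
  rw [hQ, hQ, smul_dotProduct, dotProduct_smul, smul_eq_mul, smul_eq_mul]
  split_ifs with hij
  · rw [hij, ← hr j]
    field_simp [hr0 j]
  · rw [show b i ⬝ᵥ b j = 0 from hb hij, mul_zero, mul_zero]

theorem IsSymm.exists_orthogonal_diagonalization [IsAlgClosed K] [Invertible (2 : K)]
    (hM : M.IsSymm) (htop : ⨆ μ, End.eigenspace (toLin' M) μ = ⊤) :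
    ∃ Q D : Matrix n n K, Qᵀ * Q = 1 ∧ D.IsDiag ∧ M = Qᵀ * D * Q := by
  obtain ⟨Q, d, hQ, hQd⟩ := hM.exists_mul_transpose_eq_one_eigenvectors htop
  have hQ' : Qᵀ * Q = 1 := mul_eq_one_comm.1 hQ
  have hMQ : M * Qᵀ = Qᵀ * diagonal d := mul_eq_mul_diagonal_iff.2 fun i => by
    rw [col_transpose]
    exact hQd i
  refine ⟨Q, diagonal d, hQ', isDiag_diagonal d, ?_⟩
  calc M = M * Qᵀ * Q := by rw [Matrix.mul_assoc, hQ', Matrix.mul_one]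
    _ = Qᵀ * diagonal d * Q := by rw [hMQ]

end Symmetric

end Matrix

theorem orthogonally_diagonalizable_of_compression_general
    (n k : ℕ) (A : Matrix (Fin n) (Fin n) ℂ)
    (U Λ : Matrix (Fin n) (Fin n) ℂ) (hU : Uᵀ * U = 1) (hΛ : Λ.IsDiag)
    (hdiag : A = U * Λ * Uᵀ)
    (Z : Matrix (Fin n) (Fin k) ℂ) (hZ : Zᵀ * Z = 1)
    (M : Matrix (Fin k) (Fin k) ℂ) (hM : A * Z = Z * M) :
    ∃ (Q D : Matrix (Fin k) (Fin k) ℂ), Qᵀ * Q = 1 ∧ D.IsDiag ∧ M = Qᵀ * D * Q := by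
  set W := Uᵀ * Z
  have hWW : Wᵀ * W = 1 := by
    rw [transpose_mul, transpose_transpose, Matrix.mul_assoc, ← Matrix.mul_assoc U,
      mul_eq_one_comm.1 hU, Matrix.one_mul, hZ]
  have hΛW : Λ * W = W * M :=
    calc Λ * W = Uᵀ * (U * Λ * Uᵀ) * Z := by
          simp only [Matrix.mul_assoc]
          rw [← Matrix.mul_assoc Uᵀ U, hU, Matrix.one_mul]
      _ = W * M := by rw [← hdiag, Matrix.mul_assoc, hM, ← Matrix.mul_assoc]
  have hMW : M = Wᵀ * Λ * W := by
    rw [Matrix.mul_assoc, hΛW, ← Matrix.mul_assoc, hWW, Matrix.one_mul]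
  have hsymm : M.IsSymm := by
    rw [IsSymm, hMW, transpose_mul (Wᵀ * Λ), transpose_mul Wᵀ, transpose_transpose,
      hΛ.isSymm.eq, Matrix.mul_assoc]
  have hcol : M * Wᵀ = Wᵀ * diagonal Λ.diag := by
    rw [hΛ.diagonal_diag, ← hsymm.eq, ← transpose_mul, ← hΛW, transpose_mul Λ W, hΛ.isSymm.eq]
  exact hsymm.exists_orthogonal_diagonalization
    (iSup_eigenspace_toLin'_eq_top_of_mul_eq_mul_diagonal hcol hWW)

/-- Let `A` be an invertible complex `n × n` matrix which is orthogonally diagonalizable,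
i.e. `A = U Λ Uᵀ` with `Λ` diagonal and `UᵀU = Id`.  Let `Z` be a complex `n × k` matrix
with `ZᵀZ = Id`.  If `M` is a complex `k × k` matrix with `A Z = Z M`, then `M` is also
orthogonally diagonalizable: `M = Qᵀ D Q` with `QᵀQ = Id` and `D` diagonal. -/
theorem orthogonally_diagonalizable_of_compression
    (n k : ℕ) (A : Matrix (Fin n) (Fin n) ℂ) (hA : IsUnit A.det)
    (U Λ : Matrix (Fin n) (Fin n) ℂ) (hU : Uᵀ * U = 1) (hΛ : Λ.IsDiag)
    (hdiag : A = U * Λ * Uᵀ)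
    (Z : Matrix (Fin n) (Fin k) ℂ) (hZ : Zᵀ * Z = 1)
    (M : Matrix (Fin k) (Fin k) ℂ) (hM : A * Z = Z * M) :
    ∃ (Q D : Matrix (Fin k) (Fin k) ℂ), Qᵀ * Q = 1 ∧ D.IsDiag ∧ M = Qᵀ * D * Q :=
  orthogonally_diagonalizable_of_compression_general n k A U Λ hU hΛ hdiag Z hZ M hM
end

section
/- Let A be a real symmetric n × n matrix with orthonormal eigenbasis u_1, ..., u_n and distinct eigenvalues, and suppose A is invertible. A complex n × k matrix Z with ZᵀZ = Id_k satisfies A Z = Z M for some symmetric complex k × k matrix M if and only if Z = [u_{i_1} ... u_{i_k}] Q for some k-element subset {i_1,...,i_k} of {1,...,n} and some complex orthogonal matrix Q ∈ O(k, ℂ). -/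
open Matrix

private lemma selection_lemma (n k : ℕ) (ν : Fin n → ℂ) (hν : Function.Injective ν)
    (C : Matrix (Fin n) (Fin k) ℂ) (hC : Cᵀ * C = 1)
    (M : Matrix (Fin k) (Fin k) ℂ)
    (hDC : Matrix.diagonal ν * C = C * M) :
    ∃ ι : Fin k → Fin n, Function.Injective ι ∧
      ∃ Q : Matrix (Fin k) (Fin k) ℂ, Qᵀ * Q = 1 ∧
        C = (Matrix.of fun i b => if i = ι b then (1 : ℂ) else 0) * Q := by
  classical
  set f : Module.End ℂ (Fin k → ℂ) := Matrix.mulVecLin Mᵀ with hf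
  have hrow : ∀ i, f (C i) = ν i • C i := by
    intro i
    ext j
    have h : ν i * C i j = ∑ l, C i l * M l j := by
      have h0 := congrFun (congrFun hDC i) j
      rwa [Matrix.diagonal_mul, Matrix.mul_apply] at h0
    simp only [hf, Matrix.mulVecLin_apply, Matrix.mulVec, dotProduct, Matrix.transpose_apply,
      Pi.smul_apply, smul_eq_mul]
    rw [h]
    exact Finset.sum_congr rfl fun l _ => mul_comm _ _
  have hli : LinearIndependent ℂ (fun i : {i : Fin n // C i ≠ 0} => C i.1) := by
    refine f.eigenvectors_linearIndependent' (fun i => ν i.1)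
      (fun a b h => Subtype.ext (hν h)) _ (fun i => ⟨?_, i.2⟩)
    exact Module.End.mem_eigenspace_iff.mpr (hrow i.1)
  have hle : Fintype.card {i : Fin n // C i ≠ 0} ≤ k := by
    simpa [Module.finrank_pi] using hli.fintype_card_le_finrank
  have hge : k ≤ Fintype.card {i : Fin n // C i ≠ 0} := by
    have hwli : LinearIndependent ℂ
        (fun (j : Fin k) (i : {i : Fin n // C i ≠ 0}) => C i.1 j) := by
      rw [Fintype.linearIndependent_iff]
      intro g hg
      have hCg : C *ᵥ g = 0 := by
        ext i
        by_cases h : C i = 0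
        · simp [Matrix.mulVec, dotProduct, congrFun h]
        · have := congrFun hg ⟨i, h⟩
          simpa [Matrix.mulVec, dotProduct, mul_comm] using this
      have h1 : (Cᵀ * C) *ᵥ g = 0 := by
        rw [← Matrix.mulVec_mulVec, hCg, Matrix.mulVec_zero]
      rw [hC, Matrix.one_mulVec] at h1
      exact fun j => congrFun h1 j
    simpa [Module.finrank_pi] using hwli.fintype_card_le_finrank
  have hcard : Fintype.card {i : Fin n // C i ≠ 0} = k := le_antisymm hle hge
  let e : Fin k ≃ {i : Fin n // C i ≠ 0} := (Fintype.equivFinOfCardEq hcard).symm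
  set ι : Fin k → Fin n := fun b => (e b).1 with hι
  have hinj : Function.Injective ι := fun a b h => e.injective (Subtype.ext h)
  have hsurj : ∀ i, C i ≠ 0 → ∃ b, ι b = i := by
    intro i h
    exact ⟨e.symm ⟨i, h⟩, by simp [hι]⟩
  set P : Matrix (Fin n) (Fin k) ℂ := Matrix.of (fun i b => if i = ι b then (1 : ℂ) else 0)
    with hP
  set Q : Matrix (Fin k) (Fin k) ℂ := Matrix.of (fun b j => C (ι b) j) with hQdef
  have hCPQ : C = P * Q := by
    ext i j
    rw [Matrix.mul_apply]
    simp only [hP, hQdef, Matrix.of_apply, ite_mul, one_mul, zero_mul]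
    by_cases h : C i = 0
    · have hz : C i j = 0 := by have := congrFun h j; simpa using this
      rw [hz]
      refine Eq.symm (Finset.sum_eq_zero fun b _ => ?_)
      split
      · next heq => rw [← heq]; exact hz
      · rfl
    · obtain ⟨b₀, hb₀⟩ := hsurj i h
      rw [Finset.sum_eq_single b₀]
      · rw [if_pos hb₀.symm, hb₀]
      · intro b _ hb
        rw [if_neg]
        intro heq
        exact hb (hinj (heq.symm.trans hb₀.symm))
      · exact fun hmem => absurd (Finset.mem_univ _) hmem
  have hPP : Pᵀ * P = 1 := by
    ext b b'
    rw [Matrix.mul_apply, Matrix.one_apply]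
    simp only [hP, Matrix.transpose_apply, Matrix.of_apply, ite_mul, one_mul, zero_mul]
    rw [Finset.sum_ite_eq' Finset.univ (ι b)]
    simp [hinj.eq_iff]
  have hQQ : Qᵀ * Q = 1 := by
    have h2 : Cᵀ * C = Qᵀ * Q := by
      rw [hCPQ, Matrix.transpose_mul, Matrix.mul_assoc, ← Matrix.mul_assoc Pᵀ, hPP, one_mul]
    rw [← h2, hC]
  exact ⟨ι, hinj, Q, hQQ, hCPQ⟩

/-- Let `A` be a real symmetric invertible `n × n` matrix with orthonormal eigenbasis
`u₁, …, u_n` and distinct eigenvalues `μ₁, …, μ_n`.  A complex `n × k` matrix `Z` with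
`ZᵀZ = Id` satisfies `A Z = Z M` for some symmetric complex `M` if and only if
`Z = [u_{i₁} ⋯ u_{i_k}] Q` for some injective choice of indices `i₁, …, i_k` and some
complex orthogonal matrix `Q ∈ O(k, ℂ)`. -/
theorem multiEigenvector_critical_points (n k : ℕ) (A : Matrix (Fin n) (Fin n) ℝ)
    (hA : Aᵀ = A) (hinv : IsUnit A.det)
    (u : Fin n → Fin n → ℝ) (μ : Fin n → ℝ)
    (horth : ∀ i j, u i ⬝ᵥ u j = if i = j then 1 else 0)
    (heig : ∀ i, A *ᵥ u i = μ i • u i)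
    (hdist : Function.Injective μ)
    (Z : Matrix (Fin n) (Fin k) ℂ) (hZ : Zᵀ * Z = 1) :
    (∃ M : Matrix (Fin k) (Fin k) ℂ, Mᵀ = M ∧ A.map (fun x : ℝ => (x : ℂ)) * Z = Z * M) ↔
      ∃ (ι : Fin k → Fin n), Function.Injective ι ∧
        ∃ Q : Matrix (Fin k) (Fin k) ℂ, Qᵀ * Q = 1 ∧
          Z = (Matrix.of fun a b => ((u (ι b) a : ℝ) : ℂ)) * Q := by
  classical
  set A' : Matrix (Fin n) (Fin n) ℂ := A.map (fun x : ℝ => (x : ℂ)) with hA'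
  set 𝕌 : Matrix (Fin n) (Fin n) ℂ := Matrix.of (fun a i => ((u i a : ℝ) : ℂ)) with h𝕌
  have hsym : ∀ a b, A b a = A a b := fun a b =>
    (Matrix.transpose_apply A a b).symm.trans (congrFun (congrFun hA a) b)
  -- eigen-equation for rows of 𝕌ᵀ, complexified
  have hAu : ∀ i a, (∑ b, ((u i b : ℝ) : ℂ) * ((A b a : ℝ) : ℂ)) = (μ i : ℝ) * ((u i a : ℝ) : ℂ) := by
    intro i a
    have h1 : (∑ b, u i b * A b a) = μ i * u i a := by
      have h2 := congrFun (heig i) a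
      simp only [Matrix.mulVec, dotProduct, Pi.smul_apply, smul_eq_mul] at h2
      calc (∑ b, u i b * A b a) = ∑ b, A a b * u i b :=
            Finset.sum_congr rfl fun b _ => by rw [hsym, mul_comm]
        _ = μ i * u i a := h2
    push_cast
    exact_mod_cast congrArg (fun x : ℝ => (x : ℂ)) h1
  have hU : 𝕌ᵀ * 𝕌 = 1 := by
    ext i j
    rw [Matrix.mul_apply, Matrix.one_apply]
    simp only [h𝕌, Matrix.transpose_apply, Matrix.of_apply]
    have : (∑ a, ((u i a : ℝ) : ℂ) * ((u j a : ℝ) : ℂ)) = ((u i ⬝ᵥ u j : ℝ) : ℂ) := by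
      rw [dotProduct]; push_cast; rfl
    rw [this, horth i j]
    split <;> simp
  have hU' : 𝕌 * 𝕌ᵀ = 1 := mul_eq_one_comm.mp hU
  constructor
  · rintro ⟨M, -, hM⟩
    set D : Matrix (Fin n) (Fin n) ℂ := Matrix.diagonal (fun i => ((μ i : ℝ) : ℂ)) with hD
    have hUA : 𝕌ᵀ * A' = D * 𝕌ᵀ := by
      ext i a
      rw [Matrix.mul_apply, Matrix.diagonal_mul]
      simp only [h𝕌, hA', hD, Matrix.transpose_apply, Matrix.of_apply, Matrix.map_apply]
      exact hAu i a
    set C : Matrix (Fin n) (Fin k) ℂ := 𝕌ᵀ * Z with hCdef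
    have hCC : Cᵀ * C = 1 := by
      rw [hCdef, Matrix.transpose_mul, Matrix.transpose_transpose, Matrix.mul_assoc,
        ← Matrix.mul_assoc 𝕌, hU', Matrix.one_mul, hZ]
    have hDC : D * C = C * M := by
      rw [hCdef, ← Matrix.mul_assoc, ← hUA, Matrix.mul_assoc, hM, Matrix.mul_assoc]
    have hνinj : Function.Injective (fun i => ((μ i : ℝ) : ℂ)) :=
      Complex.ofReal_injective.comp hdist
    obtain ⟨ι, hinj, Q, hQQ, hCPQ⟩ := selection_lemma n k _ hνinj C hCC M hDC
    refine ⟨ι, hinj, Q, hQQ, ?_⟩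
    have hZC : Z = 𝕌 * C := by
      rw [hCdef, ← Matrix.mul_assoc, hU', Matrix.one_mul]
    have hUP : 𝕌 * (Matrix.of fun i b => if i = ι b then (1 : ℂ) else 0) =
        (Matrix.of fun a b => ((u (ι b) a : ℝ) : ℂ)) := by
      ext a b
      rw [Matrix.mul_apply]
      simp only [h𝕌, Matrix.of_apply, mul_ite, mul_one, mul_zero]
      rw [Finset.sum_ite_eq' Finset.univ (ι b)]
      simp
    rw [hZC, hCPQ, ← Matrix.mul_assoc, hUP]
  · rintro ⟨ι, hinj, Q, hQQ, hZeq⟩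
    set N : Matrix (Fin n) (Fin k) ℂ := Matrix.of (fun a b => ((u (ι b) a : ℝ) : ℂ)) with hN
    set Dk : Matrix (Fin k) (Fin k) ℂ := Matrix.diagonal (fun b => ((μ (ι b) : ℝ) : ℂ)) with hDk
    have hQQ' : Q * Qᵀ = 1 := mul_eq_one_comm.mp hQQ
    have hAN : A' * N = N * Dk := by
      ext a b
      rw [Matrix.mul_apply, Matrix.mul_diagonal]
      simp only [hA', hN, hDk, Matrix.of_apply, Matrix.map_apply]
      have h2 := congrFun (heig (ι b)) a
      simp only [Matrix.mulVec, dotProduct, Pi.smul_apply, smul_eq_mul] at h2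
      have : (∑ c, ((A a c : ℝ) : ℂ) * ((u (ι b) c : ℝ) : ℂ)) = ((μ (ι b) : ℝ) : ℂ) * ((u (ι b) a : ℝ) : ℂ) := by
        push_cast
        exact_mod_cast congrArg (fun x : ℝ => (x : ℂ)) h2
      rw [this, mul_comm]
    refine ⟨Qᵀ * Dk * Q, ?_, ?_⟩
    · rw [Matrix.transpose_mul, Matrix.transpose_mul, Matrix.transpose_transpose,
        Matrix.diagonal_transpose, Matrix.mul_assoc]
    · calc A' * Z = A' * N * Q := by rw [hZeq, Matrix.mul_assoc]
        _ = N * Dk * Q := by rw [hAN]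
        _ = N * (Q * Qᵀ) * Dk * Q := by rw [hQQ', Matrix.mul_one]
        _ = (N * Q) * (Qᵀ * Dk * Q) := by
            simp only [Matrix.mul_assoc]
        _ = Z * (Qᵀ * Dk * Q) := by rw [← hZeq]
end
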